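/- Let p be a prime and let Γ = ℤ/pℤ ≀ ℤ be the restricted wreath product, i.e., the semidirect product (⊕_{i∈ℤ} ℤ/pℤ) ⋊ ℤ where ℤ acts by shifting coordinates, with generating set X = {t, δ₀}, where t is a generator of the ℤ factor and δ₀ is the element of the direct sum supported at 0 with value 1. Then F_{Γ,X}(n) ≽ n^{1/2}: there exists a natural number M ≥ 1 such that ⌊√n⌋ ≤ M · F_{Γ,X}(M·n) for all n ≥ 1 (inequality in ℕ∞). -/

import Mathlib

open scoped ENat

/-- `γ` is a product of at most `n` elements of `X ∪ X⁻¹`. -/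
def wordLenLE {G : Type*} [Group G] (X : Set G) (γ : G) (n : ℕ) : Prop :=
  ∃ w : List G, w.length ≤ n ∧ (∀ x ∈ w, x ∈ X ∨ x⁻¹ ∈ X) ∧ w.prod = γ

/-- `D^P_Γ(γ)`: the minimal cardinality of a finite quotient of `Γ` with property `P`
detecting `γ`. -/
noncomputable def DQuot {G : Type*} [Group G] (P : GrpCat.{0} → Prop) (γ : G) : ℕ∞ :=
  sInf {c : ℕ∞ | ∃ (Q : GrpCat.{0}) (φ : G →* ↥Q), Finite ↥Q ∧ P Q ∧
    Function.Surjective φ ∧ φ γ ≠ 1 ∧ c = (Nat.card ↥Q : ℕ∞)}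

/-- `F^P_{Γ,X}(n)`: residual finiteness growth. -/
noncomputable def FGrowth {G : Type*} [Group G] (P : GrpCat.{0} → Prop) (X : Set G) (n : ℕ) : ℕ∞ :=
  ⨆ (γ : G) (_ : γ ≠ 1) (_ : wordLenLE X γ n), DQuot P γ

def allFiniteClass : GrpCat.{0} → Prop := fun _ => True

def solvableClass : GrpCat.{0} → Prop := fun Q => IsSolvable ↥Q

def nilpotentClass : GrpCat.{0} → Prop := fun Q => Group.IsNilpotent ↥Q

/-- `F^P_{Γ,X}` is at most polynomial in `log n`. -/
def PolyLogBounded {G : Type*} [Group G] (P : GrpCat.{0} → Prop) (X : Set G) : Prop :=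
  ∃ M r : ℕ, 1 ≤ M ∧ ∀ n : ℕ, 1 ≤ n →
    FGrowth P X n ≤ ((M * ⌈Real.log (M * n) ^ r⌉₊ : ℕ) : ℕ∞)

def VirtuallyNilpotent (G : Type*) [Group G] : Prop :=
  ∃ H : Subgroup G, H.FiniteIndex ∧ Group.IsNilpotent H

/-- Shift-by-one automorphism of `ℤ →₀ A`. -/
noncomputable def shiftAut (A : Type*) [AddCommGroup A] : (ℤ →₀ A) ≃+ (ℤ →₀ A) :=
  Finsupp.domCongr (Equiv.addRight (1 : ℤ))

/-- The shift action of `ℤ` on the base group of the wreath product. -/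
noncomputable def shiftAction (A : Type*) [AddCommGroup A] :
    Multiplicative ℤ →* MulAut (Multiplicative (ℤ →₀ A)) :=
  zpowersHom _ (AddEquiv.toMultiplicative (shiftAut A))

/-- The restricted wreath product `A ≀ ℤ = (⊕_{i ∈ ℤ} A) ⋊ ℤ`, where `ℤ` acts by
shifting coordinates. -/
noncomputable abbrev WreathZ (A : Type*) [AddCommGroup A] : Type _ :=
  SemidirectProduct (Multiplicative (ℤ →₀ A)) (Multiplicative ℤ) (shiftAction A)

/-- The generator `t` of the acting `ℤ` factor. -/
noncomputable def tGen (A : Type*) [AddCommGroup A] : WreathZ A :=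
  SemidirectProduct.inr (Multiplicative.ofAdd (1 : ℤ))

/-- The element `δ₀` of the direct sum supported at `0` with value `a`. -/
noncomputable def deltaGen {A : Type*} [AddCommGroup A] (a : A) : WreathZ A :=
  SemidirectProduct.inl (Multiplicative.ofAdd (Finsupp.single (0 : ℤ) a))

/-!
Horner's scheme `f = C (f.coeff 0) + X * f.divX` realises a polynomial `f` over `ZMod p` as an
element of the base group of word length at most `(p + 1) * (deg f + 1)`. In a finite quotient
in which `t` has order `k`, conjugation by `t ^ k` becomes trivial, so the base group maps
through `(ZMod p)[X] ⧸ (X ^ k - 1)`. Hence `f = ∏_{k ≤ √n} (X ^ k - 1)`, of degree at most `n`,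
is detected only by quotients in which `t` has order greater than `√n`.
-/

section WordLength

variable {G : Type*} [Group G] {X : Set G}

lemma wordLenLE_one : wordLenLE X 1 0 := ⟨[], le_rfl, by simp, rfl⟩

lemma wordLenLE_of_mem {x : G} (hx : x ∈ X) : wordLenLE X x 1 :=
  ⟨[x], le_rfl, by simp [hx], List.prod_singleton⟩

lemma wordLenLE_inv_of_mem {x : G} (hx : x ∈ X) : wordLenLE X x⁻¹ 1 :=
  ⟨[x⁻¹], le_rfl, by simp [hx], List.prod_singleton⟩

lemma wordLenLE.mono {γ : G} {m n : ℕ} (h : wordLenLE X γ m) (hmn : m ≤ n) :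
    wordLenLE X γ n :=
  let ⟨w, hw, hX, hprod⟩ := h
  ⟨w, hw.trans hmn, hX, hprod⟩

lemma wordLenLE.mul {a b : G} {m n : ℕ} (ha : wordLenLE X a m) (hb : wordLenLE X b n) :
    wordLenLE X (a * b) (m + n) := by
  obtain ⟨u, hu, huX, rfl⟩ := ha
  obtain ⟨v, hv, hvX, rfl⟩ := hb
  refine ⟨u ++ v, by simp; omega, fun x hx => ?_, List.prod_append⟩
  rcases List.mem_append.1 hx with hx | hx
  exacts [huX x hx, hvX x hx]

lemma wordLenLE.pow {x : G} {m : ℕ} (h : wordLenLE X x m) (k : ℕ) :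
    wordLenLE X (x ^ k) (m * k) := by
  induction k with
  | zero => simpa using wordLenLE_one
  | succ k ih => simpa [pow_succ, mul_add] using ih.mul h

end WordLength

section Detection

variable {G : Type*} [Group G] {P : GrpCat.{0} → Prop}

lemma le_DQuot {γ : G} {c : ℕ∞}
    (h : ∀ (Q : GrpCat.{0}) (φ : G →* Q), Finite Q → P Q → Function.Surjective φ → φ γ ≠ 1 →
      c ≤ Nat.card Q) :
    c ≤ DQuot P γ :=
  le_sInf fun _ ⟨Q, φ, hQ, hP, hφ, hγ, hc⟩ => hc ▸ h Q φ hQ hP hφ hγ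

lemma DQuot_le_FGrowth {X : Set G} {γ : G} {n : ℕ} (hγ : γ ≠ 1) (h : wordLenLE X γ n) :
    DQuot P γ ≤ FGrowth P X n :=
  le_iSup_of_le γ <| le_iSup₂_of_le hγ h le_rfl

end Detection

open Polynomial Multiplicative SemidirectProduct

namespace Polynomial

section Semiring

variable (R : Type*) [Semiring R]

noncomputable def toIntFinsupp : R[X] →+ (ℤ →₀ R) where
  toFun f := f.sum fun n a => Finsupp.single (n : ℤ) a
  map_zero' := sum_zero_index _
  map_add' f g := sum_add_index f g _ (fun _ => Finsupp.single_zero _)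
    (fun _ _ _ => Finsupp.single_add _ _ _)

variable {R}

@[simp]
lemma toIntFinsupp_monomial (n : ℕ) (a : R) :
    toIntFinsupp R (monomial n a) = Finsupp.single (n : ℤ) a :=
  sum_monomial_index _ _ (Finsupp.single_zero _)

lemma toIntFinsupp_apply_natCast (f : R[X]) (n : ℕ) : toIntFinsupp R f n = f.coeff n := by
  induction f using Polynomial.induction_on' with
  | add f g hf hg => simp [hf, hg]
  | monomial m a => simp [Finsupp.single_apply, coeff_monomial]

lemma toIntFinsupp_injective : Function.Injective (toIntFinsupp R) := by
  intro f g h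
  ext n
  rw [← toIntFinsupp_apply_natCast, h, toIntFinsupp_apply_natCast]

end Semiring

lemma toIntFinsupp_X_mul {R : Type*} [Ring R] (f : R[X]) :
    toIntFinsupp R (X * f) = shiftAut R (toIntFinsupp R f) := by
  induction f using Polynomial.induction_on' with
  | add f g hf hg => simp [mul_add, hf, hg]
  | monomial n a => simp [X_mul_monomial, shiftAut]

section CommRing

variable (R : Type*) [CommRing R]

noncomputable def prodXPowSubOne (K : ℕ) : R[X] :=
  ∏ k ∈ Finset.Icc 1 K, (X ^ k - 1)

variable {R}

lemma monic_prodXPowSubOne (K : ℕ) : (prodXPowSubOne R K).Monic :=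
  monic_prod_of_monic _ _ fun k hk => by
    simpa using monic_X_pow_sub_C (1 : R) (Nat.pos_iff_ne_zero.1 (Finset.mem_Icc.1 hk).1)

lemma natDegree_prodXPowSubOne_le (K : ℕ) : (prodXPowSubOne R K).natDegree ≤ K * K :=
  calc (prodXPowSubOne R K).natDegree
      ≤ ∑ k ∈ Finset.Icc 1 K, (X ^ k - 1 : R[X]).natDegree := natDegree_prod_le _ _
    _ ≤ ∑ _k ∈ Finset.Icc 1 K, K := Finset.sum_le_sum fun k hk =>
        (natDegree_sub_le _ _).trans <| by
          simpa using (natDegree_X_pow_le k).trans (Finset.mem_Icc.1 hk).2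
    _ = K * K := by simp

lemma X_pow_sub_one_dvd_prodXPowSubOne {K k : ℕ} (hk : k ∈ Finset.Icc 1 K) :
    X ^ k - 1 ∣ prodXPowSubOne R K :=
  Finset.dvd_prod_of_mem _ hk

end CommRing

end Polynomial

namespace WreathZ

section Ring

variable {R : Type*} [Ring R]

noncomputable def ofPoly (f : R[X]) : WreathZ R := inl (ofAdd (toIntFinsupp R f))

lemma ofPoly_sub (f g : R[X]) : ofPoly (f - g) = ofPoly f * (ofPoly g)⁻¹ := by
  rw [ofPoly, map_sub, ofAdd_sub, _root_.map_div, div_eq_mul_inv]; rfl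

lemma ofPoly_eq_one_iff {f : R[X]} : ofPoly f = 1 ↔ f = 0 := by
  rw [ofPoly, ← map_one inl, inl_injective.eq_iff, ← ofAdd_zero, ofAdd.injective.eq_iff,
    ← map_zero (toIntFinsupp R), toIntFinsupp_injective.eq_iff]

lemma ofPoly_C (a : R) : ofPoly (C a) = deltaGen a := by
  simp [ofPoly, deltaGen, ← monomial_zero_left]

lemma tGen_mul_inl_mul_inv (F : ℤ →₀ R) :
    tGen R * inl (ofAdd F) * (tGen R)⁻¹ = inl (ofAdd (shiftAut R F)) := by
  rw [tGen, ← map_inv, ← inl_aut]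
  simp [shiftAction, zpowersHom_apply]

lemma ofPoly_X_mul (f : R[X]) : ofPoly (X * f) = tGen R * ofPoly f * (tGen R)⁻¹ := by
  rw [ofPoly, ofPoly, tGen_mul_inl_mul_inv, toIntFinsupp_X_mul]

lemma ofPoly_X_pow_mul (k : ℕ) (f : R[X]) :
    ofPoly (X ^ k * f) = tGen R ^ k * ofPoly f * (tGen R ^ k)⁻¹ := by
  induction k with
  | zero => simp
  | succ k ih => rw [pow_succ', mul_assoc, ofPoly_X_mul, ih]; group

lemma ofPoly_C_add_X_mul (a : R) (f : R[X]) :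
    ofPoly (C a + X * f) = deltaGen a * (tGen R * ofPoly f * (tGen R)⁻¹) := by
  rw [← ofPoly_C, ← ofPoly_X_mul, ofPoly, ofPoly, ofPoly, map_add, ofAdd_add, map_mul]

lemma map_ofPoly_eq_one_of_dvd {Q : Type*} [Group Q] (φ : WreathZ R →* Q) {k : ℕ}
    (hk : φ (tGen R) ^ k = 1) {f : R[X]} (hf : X ^ k - 1 ∣ f) : φ (ofPoly f) = 1 := by
  obtain ⟨g, rfl⟩ := hf
  rw [sub_mul, one_mul, ofPoly_sub, ofPoly_X_pow_mul, map_mul, map_inv, map_mul, map_mul,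
    map_inv, map_pow, hk]
  group

end Ring

section ZMod

variable {p : ℕ} [NeZero p] {S : Set (WreathZ (ZMod p))}

lemma wordLenLE_deltaGen (hδ : deltaGen 1 ∈ S) (c : ZMod p) :
    wordLenLE S (deltaGen c) c.val := by
  have : deltaGen c = deltaGen (1 : ZMod p) ^ c.val := by
    rw [deltaGen, deltaGen, ← map_pow, ← ofAdd_nsmul, Finsupp.smul_single, nsmul_one,
      ZMod.natCast_zmod_val]
  simpa [this] using (wordLenLE_of_mem hδ).pow c.val

lemma wordLenLE_ofPoly (ht : tGen (ZMod p) ∈ S) (hδ : deltaGen 1 ∈ S) (f : (ZMod p)[X]) :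
    wordLenLE S (ofPoly f) ((p + 1) * (f.natDegree + 1)) := by
  suffices ∀ n, ∀ f : (ZMod p)[X], f.natDegree ≤ n →
      wordLenLE S (ofPoly f) ((p + 1) * (n + 1)) from this _ f le_rfl
  intro n
  induction n with
  | zero =>
    intro f hf
    rw [eq_C_of_natDegree_le_zero hf, ofPoly_C]
    exact (wordLenLE_deltaGen hδ _).mono (by have := (f.coeff 0).val_lt; omega)
  | succ n ih =>
    intro f hf
    have hdivX : f.divX.natDegree ≤ n := by rw [natDegree_divX_eq_natDegree_tsub_one]; omega
    rw [← X_mul_divX_add f, add_comm, ofPoly_C_add_X_mul]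
    refine ((wordLenLE_deltaGen hδ _).mul <| ((wordLenLE_of_mem ht).mul (ih _ hdivX)).mul
      (wordLenLE_inv_of_mem ht)).mono ?_
    have := (f.coeff 0).val_lt
    nlinarith

end ZMod

lemma lt_orderOf_of_map_ofPoly_ne_one {R : Type*} [CommRing R] {Q : Type*} [Group Q]
    [Finite Q] (φ : WreathZ R →* Q) {K : ℕ} (h : φ (ofPoly (prodXPowSubOne R K)) ≠ 1) :
    K < orderOf (φ (tGen R)) := by
  by_contra! hK
  exact h <| map_ofPoly_eq_one_of_dvd φ (pow_orderOf_eq_one _)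
    (X_pow_sub_one_dvd_prodXPowSubOne (Finset.mem_Icc.2 ⟨orderOf_pos _, hK⟩))

end WreathZ

open WreathZ

theorem stmt15 (p : ℕ) (hp : p.Prime) :
    ∃ M : ℕ, 1 ≤ M ∧ ∀ n : ℕ, 1 ≤ n →
      ((Nat.sqrt n : ℕ) : ℕ∞) ≤
        (M : ℕ∞) * FGrowth allFiniteClass
          ({tGen (ZMod p), deltaGen (1 : ZMod p)} : Set (WreathZ (ZMod p))) (M * n) := by
  have : Fact p.Prime := ⟨hp⟩
  refine ⟨2 * (p + 1), by omega, fun n hn => ?_⟩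
  set K := n.sqrt
  set g := ofPoly (prodXPowSubOne (ZMod p) K)
  have hg : g ≠ 1 := ofPoly_eq_one_iff.not.2 (monic_prodXPowSubOne K).ne_zero
  have hword : wordLenLE {tGen (ZMod p), deltaGen 1} g (2 * (p + 1) * n) :=
    (wordLenLE_ofPoly (by simp) (by simp) _).mono <| by
      have := natDegree_prodXPowSubOne_le (R := ZMod p) K
      have := Nat.sqrt_le n
      nlinarith
  have hD : ((K + 1 : ℕ) : ℕ∞) ≤ DQuot allFiniteClass g := le_DQuot fun Q φ _ _ _ hφ =>
    Nat.cast_le.2 ((lt_orderOf_of_map_ofPoly_ne_one φ hφ).trans_le orderOf_le_card)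
  calc ((K : ℕ) : ℕ∞) ≤ ((K + 1 : ℕ) : ℕ∞) := Nat.cast_le.2 K.le_succ
    _ ≤ FGrowth allFiniteClass _ (2 * (p + 1) * n) := hD.trans (DQuot_le_FGrowth hg hword)
    _ ≤ _ := le_mul_of_one_le_left zero_le (by exact_mod_cast (by omega : 1 ≤ 2 * (p + 1)))
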